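/- Assume xi(a) = 0 for every node a (the case of zero merge cost α_merge = 0, in which the objective Cost_a(S) reduces to Σ_{b ∈ S} cost(b)). Then for every node a belonging to V, sigma(a) = min{ Σ_{b ∈ S} cost(b) : S is feasible for subtree(a) }, and this minimum is attained by the set Vstar(a) computed by the recurrences; i.e., the dynamic program of Theorem 1 computes a minimum-cost feasible selection of nodes. -/

import Mathlib

/-!
Theorem 1 of "STREAK": in the case of zero merge cost (`xi ≡ 0`), the dynamic
program computes a minimum-cost feasible selection of nodes.

Nodes of a finite rooted tree are represented by paths (lists of child indices)
from the root.
-/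

open scoped Classical

/-- A finite rooted tree: each node has a finite list of children. -/
inductive RTree : Type where
  | node : List RTree → RTree

namespace RTree

/-- The subtree reached by following a path of child indices, if it exists. -/
def subAt : RTree → List ℕ → Option RTree
  | t, [] => some t
  | node cs, i :: p =>
    match cs[i]? with
    | some c => subAt c p
    | none => none
termination_by t p => p.length

/-- A path is a node of the tree if following it leads to a subtree. -/
def valid (t : RTree) (p : List ℕ) : Prop := (t.subAt p).isSome

/-- `subtreeOf t p` is the set of nodes of `t` consisting of `p` together with
all of its descendants (nodes whose path extends `p`). -/
def subtreeOf (t : RTree) (p : List ℕ) : Set (List ℕ) :=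
  {q | t.valid q ∧ p <+: q}

/-- A node `p ∈ V` is a `V`-leaf if no child of `p` belongs to `V`. -/
def VLeaf (t : RTree) (V : Set (List ℕ)) (p : List ℕ) : Prop :=
  p ∈ V ∧ t.valid p ∧ ∀ i : ℕ, p ++ [i] ∉ V

/-- `S` is feasible for the subtree rooted at `p`: `S ⊆ V ∩ subtree(p)` and
every `V`-leaf lying in `subtree(p)` has an ancestor-or-self, itself lying in
`subtree(p)`, that belongs to `S`. -/
def Feasible (t : RTree) (V : Set (List ℕ)) (p : List ℕ) (S : Set (List ℕ)) : Prop :=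
  S ⊆ V ∩ subtreeOf t p ∧
  ∀ q, VLeaf t V q → q ∈ subtreeOf t p →
    ∃ r ∈ S, r ∈ subtreeOf t p ∧ r <+: q

/-- The dynamic program of Theorem 1: for the subtree rooted at path `p`,
compute `(Vstar p, sigma p, xistar p)` by the recurrences.  If `p ∉ V` the
value is `(∅, 0, 0)`; if `p` is a `V`-leaf (no child in `V`) it is
`({p}, cost p, xi p)`; otherwise, with `γ` the children of `p` belonging to
`V`, `μ = Σ_{j ∈ γ} xistar j` if `|γ| > 1` and `0` otherwise, the value is
`({p}, cost p, xi p)` when `cost p < μ + Σ_{j ∈ γ} sigma j`, and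
`(⋃_{j ∈ γ} Vstar j, Σ_{j ∈ γ} sigma j + μ, Σ_{j ∈ γ} xistar j)` otherwise. -/
noncomputable def dp (V : Set (List ℕ)) (cost xi : List ℕ → ℝ) :
    RTree → List ℕ → Set (List ℕ) × ℝ × ℝ
  | node cs, p =>
    let recs := (cs.zipIdx.map Prod.swap).attach.map fun x =>
      (p ++ [x.1.1], dp V cost xi x.1.2 (p ++ [x.1.1]))
    if p ∈ V then
      let γ := recs.filter fun r => decide (r.1 ∈ V)
      if γ.isEmpty then ({p}, cost p, xi p)
      else
        let σsum := (γ.map fun r => r.2.2.1).sum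
        let ξsum := (γ.map fun r => r.2.2.2).sum
        let μ := if 1 < γ.length then ξsum else 0
        if cost p < μ + σsum then ({p}, cost p, xi p)
        else (⋃ r ∈ γ, r.2.1, σsum + μ, ξsum)
    else (∅, 0, 0)
termination_by t _ => sizeOf t
decreasing_by
  simp_wf
  have hx : x.1.2 ∈ cs := by
    have h1 : x.1.2 ∈ (cs.zipIdx.map Prod.swap).map Prod.snd := List.mem_map_of_mem x.2
    simp [List.map_map] at h1
    obtain ⟨k, hk⟩ := h1
    rw [List.mem_zipIdx_iff_getElem?] at hk
    exact List.mem_of_getElem? hk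
  have := List.sizeOf_lt_of_mem hx
  omega

/-- `Vstar a`, for a node `a` of the tree `t`. -/
noncomputable def VstarAt (t : RTree) (V : Set (List ℕ)) (cost xi : List ℕ → ℝ)
    (p : List ℕ) : Set (List ℕ) :=
  match t.subAt p with
  | some s => (dp V cost xi s p).1
  | none => ∅

/-- `sigma a`, for a node `a` of the tree `t`. -/
noncomputable def sigmaAt (t : RTree) (V : Set (List ℕ)) (cost xi : List ℕ → ℝ)
    (p : List ℕ) : ℝ :=
  match t.subAt p with
  | some s => (dp V cost xi s p).2.1
  | none => 0

end RTree

/-!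
With `xi ≡ 0` every `xistar` vanishes, hence so does the merge penalty `μ`, and the recurrence
becomes the classical tree dynamic program. A set `S` feasible for `subtree(p)` either contains
`p`, and then costs at least `cost p`, or it does not; then `p` is not a `V`-leaf and `S` splits
along the pairwise disjoint subtrees of the `V`-children `q` of `p` into sets feasible for
`subtree(q)`, so it costs at least `∑ q, sigma q`. Conversely `{p}` and the union of the
children's optimal sets are feasible with exactly these costs, so by induction on the tree
`sigma p` is the minimum and `Vstar p` attains it.
-/

theorem tsum_subtype_mono_of_finite {α : Type*} {f : α → ℝ} (hf : ∀ a, 0 ≤ f a)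
    {S T : Set α} (hST : S ⊆ T) (hT : T.Finite) : ∑' b : S, f b ≤ ∑' b : T, f b := by
  rw [← Set.union_sdiff_cancel hST, Summable.tsum_union_disjoint Set.disjoint_sdiff_right
    ((hT.subset hST).summable f) (hT.sdiff.summable f)]
  exact le_add_of_nonneg_right (tsum_nonneg fun b => hf b)

theorem le_tsum_subtype_of_mem {α : Type*} {f : α → ℝ} (hf : ∀ a, 0 ≤ f a) {S : Set α}
    (hS : S.Finite) {a : α} (ha : a ∈ S) : f a ≤ ∑' b : S, f b := by
  simpa using tsum_subtype_mono_of_finite hf (Set.singleton_subset_iff.mpr ha) hS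

namespace List

variable {α : Type*}

theorem mem_of_prefix_of_mem {V : Set (List α)}
    (hanc : ∀ (p : List α) (i : α), p ++ [i] ∈ V → p ∈ V)
    {q r : List α} (hq : q ∈ V) (hr : r <+: q) : r ∈ V := by
  obtain ⟨u, rfl⟩ := hr
  induction u using List.reverseRecOn with
  | nil => simpa using hq
  | append_singleton u i ih => exact ih (hanc _ _ (by simpa using hq))

theorem IsPrefix.exists_append_singleton_prefix {p q : List α} (h : p <+: q) (hne : p ≠ q) :
    ∃ i, p ++ [i] <+: q := by
  obtain ⟨_ | ⟨i, w⟩, rfl⟩ := h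
  · simp at hne
  · exact ⟨i, w, by simp⟩

theorem append_singleton_prefix_of_prefix {p q r : List α} {i : α} (hi : p ++ [i] <+: q)
    (hr : r <+: q) (hpr : p <+: r) (hne : r ≠ p) : p ++ [i] <+: r := by
  refine prefix_of_prefix_length_le hi hr ?_
  have : p.length ≠ r.length := fun h => hne (hpr.eq_of_length h).symm
  have := hpr.length_le
  simp only [length_append, length_singleton]
  omega

end List

namespace RTree

theorem induction_mem {P : RTree → Prop} (h : ∀ cs, (∀ c ∈ cs, P c) → P (node cs)) :
    ∀ s, P s
  | node cs => h cs fun c _ => induction_mem h c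

theorem subAt_append (p q : List ℕ) (t : RTree) :
    t.subAt (p ++ q) = (t.subAt p).bind (·.subAt q) := by
  induction p generalizing t with
  | nil => simp [subAt]
  | cons i p ih =>
    obtain ⟨cs⟩ := t
    cases h : cs[i]? <;> simp [subAt, h, ih]

theorem subAt_append_singleton {t : RTree} {p : List ℕ} {cs : List RTree}
    (h : t.subAt p = some (node cs)) (i : ℕ) : t.subAt (p ++ [i]) = cs[i]? := by
  rw [subAt_append, h, Option.bind_some]
  cases hi : cs[i]? <;> simp [subAt, hi]

theorem valid_of_prefix {t : RTree} {q r : List ℕ} (hq : t.valid q) (hr : r <+: q) :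
    t.valid r := by
  obtain ⟨u, rfl⟩ := hr
  unfold valid at *
  rw [subAt_append] at hq
  cases h : t.subAt r <;> simp_all

theorem finite_valid : ∀ t : RTree, {q | t.valid q}.Finite := by
  refine induction_mem fun cs ih => ?_
  refine ((Set.finite_iUnion fun i : Fin cs.length =>
    (ih _ (List.getElem_mem i.2)).image (List.cons i.1)).insert []).subset ?_
  rintro (_ | ⟨i, q⟩) hq
  · exact Set.mem_insert _ _
  · simp only [Set.mem_ofPred_eq, valid, subAt] at hq
    cases h : cs[i]? with
    | none => simp [h] at hq
    | some c =>
      obtain ⟨hi, rfl⟩ := List.getElem?_eq_some_iff.mp h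
      simp only [h] at hq
      exact Set.mem_insert_of_mem _ (Set.mem_iUnion.mpr ⟨⟨i, hi⟩, q, hq, rfl⟩)

theorem subtreeOf_anti {t : RTree} {p q : List ℕ} (h : p <+: q) :
    subtreeOf t q ⊆ subtreeOf t p :=
  fun _ hr => ⟨hr.1, h.trans hr.2⟩

theorem disjoint_subtreeOf {t : RTree} {p q : List ℕ} (hlen : p.length = q.length)
    (hne : p ≠ q) : Disjoint (subtreeOf t p) (subtreeOf t q) :=
  Set.disjoint_left.mpr fun _ hp hq =>
    hne ((List.prefix_of_prefix_length_le hp.2 hq.2 hlen.le).eq_of_length hlen)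

/-- The children of `p` in `V`, i.e. the paper's `γ(p)`, as paths. -/
noncomputable def vChildren (t : RTree) (V : Set (List ℕ)) (p : List ℕ) : Finset (List ℕ) :=
  (finite_valid t).toFinset.filter fun q => q ∈ V ∧ ∃ i, q = p ++ [i]

theorem mem_vChildren {t : RTree} {V : Set (List ℕ)} {p q : List ℕ} :
    q ∈ vChildren t V p ↔ t.valid q ∧ q ∈ V ∧ ∃ i, q = p ++ [i] := by
  simp [vChildren]

theorem pairwise_disjoint_subtreeOf_vChildren (t : RTree) (V : Set (List ℕ)) (p : List ℕ) :
    (vChildren t V p : Set (List ℕ)).Pairwise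
      fun q q' => Disjoint (subtreeOf t q) (subtreeOf t q') := by
  intro q hq q' hq' hne
  obtain ⟨i, rfl⟩ := (mem_vChildren.mp hq).2.2
  obtain ⟨j, rfl⟩ := (mem_vChildren.mp hq').2.2
  exact disjoint_subtreeOf (by simp) hne

section Feasible

variable {t : RTree} {V : Set (List ℕ)} {p : List ℕ} {S : Set (List ℕ)}

theorem Feasible.finite (h : Feasible t V p S) : S.Finite :=
  (finite_valid t).subset fun _ hx => (h.1 hx).2.1

theorem feasible_singleton (hp : p ∈ V) (hvalid : t.valid p) : Feasible t V p {p} := by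
  refine ⟨?_, fun q _ hq => ⟨p, rfl, ⟨hvalid, List.prefix_refl p⟩, hq.2⟩⟩
  exact Set.singleton_subset_iff.mpr ⟨hp, hvalid, List.prefix_refl p⟩

theorem Feasible.mem_of_vChildren_eq_empty (hVnodes : ∀ q ∈ V, t.valid q)
    (h : Feasible t V p S) (hp : p ∈ V) (hvalid : t.valid p) (hC : vChildren t V p = ∅) :
    p ∈ S := by
  have hleaf : VLeaf t V p := ⟨hp, hvalid, fun i hi => by
    simpa [hC] using mem_vChildren.mpr ⟨hVnodes _ hi, hi, i, rfl⟩⟩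
  obtain ⟨r, hrS, hr, hrp⟩ := h.2 p hleaf ⟨hvalid, List.prefix_refl p⟩
  rwa [← hrp.eq_of_length (le_antisymm hrp.length_le hr.2.length_le)]

theorem Feasible.inter_subtreeOf (h : Feasible t V p S) (hpS : p ∉ S) (i : ℕ) :
    Feasible t V (p ++ [i]) (S ∩ subtreeOf t (p ++ [i])) := by
  refine ⟨fun x hx => ⟨(h.1 hx.1).1, hx.2⟩, fun q hq hqi => ?_⟩
  obtain ⟨r, hrS, hr, hrq⟩ := h.2 q hq (subtreeOf_anti (List.prefix_append p [i]) hqi)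
  have hir : p ++ [i] <+: r :=
    List.append_singleton_prefix_of_prefix hqi.2 hrq hr.2 fun hrp => hpS (hrp ▸ hrS)
  exact ⟨r, ⟨hrS, hr.1, hir⟩, ⟨hr.1, hir⟩, hrq⟩

theorem Feasible.biUnion_vChildren (hanc : ∀ (p : List ℕ) (i : ℕ), p ++ [i] ∈ V → p ∈ V)
    (hC : (vChildren t V p).Nonempty) {T : List ℕ → Set (List ℕ)}
    (hT : ∀ q ∈ vChildren t V p, Feasible t V q (T q)) :
    Feasible t V p (⋃ q ∈ vChildren t V p, T q) := by
  constructor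
  · refine Set.iUnion₂_subset fun q hq x hx => ?_
    obtain ⟨i, rfl⟩ := (mem_vChildren.mp hq).2.2
    exact ⟨((hT _ hq).1 hx).1, subtreeOf_anti (List.prefix_append p [i]) ((hT _ hq).1 hx).2⟩
  · intro q hq hqp
    have hpq : p ≠ q := by
      rintro rfl
      obtain ⟨c, hc⟩ := hC
      obtain ⟨-, hcV, i, rfl⟩ := mem_vChildren.mp hc
      exact hq.2.2 i hcV
    obtain ⟨i, hi⟩ := hqp.2.exists_append_singleton_prefix hpq
    have hiC : p ++ [i] ∈ vChildren t V p :=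
      mem_vChildren.mpr
        ⟨valid_of_prefix hqp.1 hi, List.mem_of_prefix_of_mem hanc hq.1 hi, i, rfl⟩
    obtain ⟨r, hrT, hr, hrq⟩ := (hT _ hiC).2 q hq ⟨hqp.1, hi⟩
    exact ⟨r, Set.mem_biUnion hiC hrT, subtreeOf_anti (List.prefix_append p [i]) hr, hrq⟩

theorem Feasible.sum_le_tsum {cost : List ℕ → ℝ} (hcost : ∀ p, 0 ≤ cost p)
    (h : Feasible t V p S) (hpS : p ∉ S) {σ : List ℕ → ℝ}
    (hσ : ∀ q ∈ vChildren t V p, ∀ S', Feasible t V q S' → σ q ≤ ∑' b : S', cost b) :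
    ∑ q ∈ vChildren t V p, σ q ≤ ∑' b : S, cost b := by
  have hdisj : (vChildren t V p : Set (List ℕ)).Pairwise
      fun q q' => Disjoint (S ∩ subtreeOf t q) (S ∩ subtreeOf t q') :=
    (pairwise_disjoint_subtreeOf_vChildren t V p).mono' fun _ _ hd =>
      hd.mono Set.inter_subset_right Set.inter_subset_right
  calc ∑ q ∈ vChildren t V p, σ q
      ≤ ∑ q ∈ vChildren t V p, ∑' b : ↑(S ∩ subtreeOf t q), cost b :=
        Finset.sum_le_sum fun q hq => hσ q hq _ <| by
          obtain ⟨i, rfl⟩ := (mem_vChildren.mp hq).2.2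
          exact h.inter_subtreeOf hpS i
    _ = ∑' b : ↑(⋃ q ∈ vChildren t V p, S ∩ subtreeOf t q), cost b :=
        (Summable.tsum_finset_bUnion_disjoint hdisj fun _ _ =>
          (h.finite.subset Set.inter_subset_left).summable cost).symm
    _ ≤ ∑' b : S, cost b :=
        tsum_subtype_mono_of_finite hcost (Set.iUnion₂_subset fun _ _ => Set.inter_subset_left)
          h.finite

end Feasible

def IsMinCostFeasible (t : RTree) (V : Set (List ℕ)) (cost : List ℕ → ℝ) (p : List ℕ)
    (S : Set (List ℕ)) (x : ℝ) : Prop :=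
  Feasible t V p S ∧ ∑' b : S, cost b = x ∧
    ∀ S', Feasible t V p S' → x ≤ ∑' b : S', cost b

section Optimal

variable {t : RTree} {V : Set (List ℕ)} {cost : List ℕ → ℝ} {p : List ℕ}

theorem IsMinCostFeasible.isLeast {S : Set (List ℕ)} {x : ℝ}
    (h : IsMinCostFeasible t V cost p S x) :
    IsLeast {y : ℝ | ∃ S : Set (List ℕ), Feasible t V p S ∧ y = ∑' b : S, cost b} x :=
  ⟨⟨S, h.1, h.2.1.symm⟩, fun _ ⟨S', hS', hy⟩ => hy ▸ h.2.2 S' hS'⟩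

theorem isMinCostFeasible_singleton (hVnodes : ∀ q ∈ V, t.valid q) (hcost : ∀ p, 0 ≤ cost p)
    (hp : p ∈ V) (hvalid : t.valid p) {σ : List ℕ → ℝ}
    (hσ : ∀ q ∈ vChildren t V p, ∀ S, Feasible t V q S → σ q ≤ ∑' b : S, cost b)
    (hlt : vChildren t V p = ∅ ∨ cost p < ∑ q ∈ vChildren t V p, σ q) :
    IsMinCostFeasible t V cost p {p} (cost p) := by
  refine ⟨feasible_singleton hp hvalid, tsum_singleton p cost, fun S hS => ?_⟩
  by_cases hpS : p ∈ S
  · exact le_tsum_subtype_of_mem hcost hS.finite hpS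
  · have hC : vChildren t V p ≠ ∅ := fun hC =>
      hpS (hS.mem_of_vChildren_eq_empty hVnodes hp hvalid hC)
    exact ((hlt.resolve_left hC).trans_le (hS.sum_le_tsum hcost hpS hσ)).le

theorem isMinCostFeasible_biUnion (hanc : ∀ (p : List ℕ) (i : ℕ), p ++ [i] ∈ V → p ∈ V)
    (hcost : ∀ p, 0 ≤ cost p) (hC : (vChildren t V p).Nonempty)
    {T : List ℕ → Set (List ℕ)} {σ : List ℕ → ℝ}
    (hle : ∑ q ∈ vChildren t V p, σ q ≤ cost p)
    (hchild : ∀ q ∈ vChildren t V p, IsMinCostFeasible t V cost q (T q) (σ q)) :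
    IsMinCostFeasible t V cost p (⋃ q ∈ vChildren t V p, T q)
      (∑ q ∈ vChildren t V p, σ q) := by
  have hdisj : (vChildren t V p : Set (List ℕ)).Pairwise fun q q' => Disjoint (T q) (T q') :=
    fun q hq q' hq' hne => (pairwise_disjoint_subtreeOf_vChildren t V p hq hq' hne).mono
      (fun _ hx => ((hchild q hq).1.1 hx).2) (fun _ hx => ((hchild q' hq').1.1 hx).2)
  refine ⟨Feasible.biUnion_vChildren hanc hC fun q hq => (hchild q hq).1, ?_, fun S hS => ?_⟩
  · rw [Summable.tsum_finset_bUnion_disjoint hdisj fun q hq =>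
      (hchild q hq).1.finite.summable cost]
    exact Finset.sum_congr rfl fun q hq => (hchild q hq).2.1
  · by_cases hpS : p ∈ S
    · exact hle.trans (le_tsum_subtype_of_mem hcost hS.finite hpS)
    · exact hS.sum_le_tsum hcost hpS fun q hq => (hchild q hq).2.2

end Optimal

section DP

variable {V : Set (List ℕ)} {cost xi : List ℕ → ℝ} {cs : List RTree} {p : List ℕ}

/-- The list `γ` built inside `dp`: the children of `p` in `V`, each with its `dp` value. -/
noncomputable def dpChildren (V : Set (List ℕ)) (cost xi : List ℕ → ℝ) (cs : List RTree)
    (p : List ℕ) : List (List ℕ × Set (List ℕ) × ℝ × ℝ) :=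
  ((cs.zipIdx.map Prod.swap).attach.map fun x =>
    (p ++ [x.1.1], dp V cost xi x.1.2 (p ++ [x.1.1]))).filter fun r => r.1 ∈ V

theorem mem_dpChildren {r : List ℕ × Set (List ℕ) × ℝ × ℝ} :
    r ∈ dpChildren V cost xi cs p ↔
      ∃ i c, cs[i]? = some c ∧ p ++ [i] ∈ V ∧
        r = (p ++ [i], dp V cost xi c (p ++ [i])) := by
  simp only [dpChildren, List.mem_filter, List.mem_map, List.mem_attach, true_and,
    Subtype.exists, List.mem_zipIdx_iff_getElem?, Prod.exists, Prod.swap_prod_mk,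
    Prod.mk.injEq, decide_eq_true_eq]
  constructor
  · rintro ⟨⟨i, c, ⟨c, i, hc, rfl, rfl⟩, rfl⟩, hV⟩
    exact ⟨i, c, hc, hV, rfl⟩
  · rintro ⟨i, c, hc, hV, rfl⟩
    exact ⟨⟨i, c, ⟨c, i, hc, rfl, rfl⟩, rfl⟩, hV⟩

theorem nodup_map_fst_dpChildren : ((dpChildren V cost xi cs p).map Prod.fst).Nodup := by
  have hfst : ((cs.zipIdx.map Prod.swap).attach.map fun x =>
      (p ++ [x.1.1], dp V cost xi x.1.2 (p ++ [x.1.1]))).map Prod.fst =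
      (List.range cs.length).map fun i => p ++ [i] := by
    rw [List.map_map]
    refine (List.attach_map_val (f := fun ic : ℕ × RTree => p ++ [ic.1])).trans ?_
    rw [List.range_eq_range', ← List.zipIdx_map_snd, List.map_map, List.map_map]
    rfl
  have hnodup : ((List.range cs.length).map fun i => p ++ [i]).Nodup :=
    List.nodup_range.map fun i j h => by simpa using h
  rw [← hfst] at hnodup
  exact hnodup.sublist (List.filter_sublist.map _)

theorem sum_xistar_dpChildren_eq_zero (h : ∀ c ∈ cs, ∀ q, (dp V cost xi c q).2.2 = 0) :
    ((dpChildren V cost xi cs p).map (·.2.2.2)).sum = 0 :=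
  List.sum_eq_zero fun x hx => by
    obtain ⟨r, hr, rfl⟩ := List.mem_map.mp hx
    obtain ⟨i, c, hc, -, rfl⟩ := mem_dpChildren.mp hr
    exact h c (List.mem_of_getElem? hc) _

theorem dp_xistar_eq_zero (hxi : ∀ p, xi p = 0) : ∀ s p, (dp V cost xi s p).2.2 = 0 := by
  refine induction_mem fun cs ih p => ?_
  rw [dp, ← dpChildren]
  simp only [sum_xistar_dpChildren_eq_zero ih, hxi]
  split_ifs <;> rfl

theorem dp_node_of_mem (hxi : ∀ p, xi p = 0) (hp : p ∈ V) :
    dp V cost xi (node cs) p =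
      let γ := dpChildren V cost xi cs p
      if γ = [] ∨ cost p < (γ.map (·.2.2.1)).sum then ({p}, cost p, 0)
      else (⋃ r ∈ γ, r.2.1, (γ.map (·.2.2.1)).sum, 0) := by
  have hξ := sum_xistar_dpChildren_eq_zero (V := V) (cost := cost) (cs := cs) (p := p)
    fun _ _ => dp_xistar_eq_zero hxi _
  rw [dp, ← dpChildren, if_pos hp]
  simp only [hξ, hxi, ite_self, zero_add, add_zero, List.isEmpty_iff, ite_or]

theorem dpChildren_values {t : RTree} (hs : t.subAt p = some (node cs))
    {r : List ℕ × Set (List ℕ) × ℝ × ℝ} (hr : r ∈ dpChildren V cost xi cs p) :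
    r.2.1 = VstarAt t V cost xi r.1 ∧ r.2.2.1 = sigmaAt t V cost xi r.1 := by
  obtain ⟨i, c, hc, -, rfl⟩ := mem_dpChildren.mp hr
  simp [VstarAt, sigmaAt, subAt_append_singleton hs, hc]

theorem toFinset_map_fst_dpChildren {t : RTree} (hs : t.subAt p = some (node cs)) :
    ((dpChildren V cost xi cs p).map Prod.fst).toFinset = vChildren t V p := by
  ext q
  simp only [List.mem_toFinset, List.mem_map, mem_vChildren]
  constructor
  · rintro ⟨r, hr, rfl⟩
    obtain ⟨i, c, hc, hV, rfl⟩ := mem_dpChildren.mp hr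
    exact ⟨by simp [valid, subAt_append_singleton hs, hc], hV, i, rfl⟩
  · rintro ⟨hq, hV, i, rfl⟩
    rw [valid, subAt_append_singleton hs] at hq
    obtain ⟨c, hc⟩ := Option.isSome_iff_exists.mp hq
    exact ⟨_, mem_dpChildren.mpr ⟨i, c, hc, hV, rfl⟩, rfl⟩

theorem VstarAt_sigmaAt_of_mem {t : RTree} (hxi : ∀ p, xi p = 0) (hp : p ∈ V)
    (hvalid : t.valid p) :
    (VstarAt t V cost xi p, sigmaAt t V cost xi p) =
      if vChildren t V p = ∅ ∨ cost p < ∑ q ∈ vChildren t V p, sigmaAt t V cost xi q then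
        ({p}, cost p)
      else
        (⋃ q ∈ vChildren t V p, VstarAt t V cost xi q,
          ∑ q ∈ vChildren t V p, sigmaAt t V cost xi q) := by
  obtain ⟨⟨cs⟩, hs⟩ := Option.isSome_iff_exists.mp hvalid
  set γ := dpChildren V cost xi cs p with hγ
  have hfst : (γ.map Prod.fst).toFinset = vChildren t V p := toFinset_map_fst_dpChildren hs
  have hempty : γ = [] ↔ vChildren t V p = ∅ := by
    rw [← hfst]
    simp
  have hsum : (γ.map (·.2.2.1)).sum = ∑ q ∈ vChildren t V p, sigmaAt t V cost xi q := by
    rw [← hfst, List.sum_toFinset _ nodup_map_fst_dpChildren, List.map_map]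
    exact congrArg List.sum (List.map_congr_left fun r hr => (dpChildren_values hs hr).2)
  have hunion : ⋃ r ∈ γ, r.2.1 = ⋃ q ∈ vChildren t V p, VstarAt t V cost xi q := by
    rw [← hfst]
    ext x
    simp only [Set.mem_iUnion, exists_prop, List.mem_toFinset, List.mem_map]
    constructor
    · rintro ⟨r, hr, hx⟩
      exact ⟨r.1, ⟨r, hr, rfl⟩, (dpChildren_values hs hr).1 ▸ hx⟩
    · rintro ⟨_, ⟨r, hr, rfl⟩, hx⟩
      exact ⟨r, hr, (dpChildren_values hs hr).1 ▸ hx⟩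
  rw [VstarAt, sigmaAt, hs]
  simp only [dp_node_of_mem hxi hp, ← hγ, hsum, hunion, hempty]
  split_ifs <;> rfl

theorem isMinCostFeasible_VstarAt {t : RTree} (hVnodes : ∀ q ∈ V, t.valid q)
    (hanc : ∀ (p : List ℕ) (i : ℕ), p ++ [i] ∈ V → p ∈ V) (hcost : ∀ p, 0 ≤ cost p)
    (hxi : ∀ p, xi p = 0) (hvalid : t.valid p) (hp : p ∈ V) :
    IsMinCostFeasible t V cost p (VstarAt t V cost xi p) (sigmaAt t V cost xi p) := by
  obtain ⟨s, hs⟩ := Option.isSome_iff_exists.mp hvalid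
  induction s using induction_mem generalizing p with
  | h cs ih =>
    have hchild : ∀ q ∈ vChildren t V p,
        IsMinCostFeasible t V cost q (VstarAt t V cost xi q) (sigmaAt t V cost xi q) := by
      intro q hq
      obtain ⟨hqvalid, hqV, i, rfl⟩ := mem_vChildren.mp hq
      obtain ⟨c, hc⟩ := Option.isSome_iff_exists.mp hqvalid
      exact ih c (List.mem_of_getElem? (subAt_append_singleton hs i ▸ hc)) hqvalid hqV hc
    have hrec := VstarAt_sigmaAt_of_mem (cost := cost) hxi hp hvalid
    split_ifs at hrec with hlt <;> obtain ⟨hT, hσ⟩ := Prod.mk.inj hrec <;> rw [hT, hσ]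
    · exact isMinCostFeasible_singleton hVnodes hcost hp hvalid (fun q hq => (hchild q hq).2.2) hlt
    · obtain ⟨hC, hle⟩ := not_or.mp hlt
      exact isMinCostFeasible_biUnion hanc hcost (Finset.nonempty_iff_ne_empty.mpr hC)
        (not_lt.mp hle) hchild

end DP

end RTree

open RTree in
/-- Assume `xi a = 0` for every node `a` (zero merge cost `α_merge = 0`, in
which case the objective `Cost_a(S)` reduces to `Σ_{b ∈ S} cost b`).  Then for
every node `a ∈ V`, `sigma(a)` is the minimum of `Σ_{b ∈ S} cost b` over all
sets `S` feasible for `subtree(a)`, and this minimum is attained by the set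
`Vstar(a)` computed by the recurrences. -/
theorem streak_dp_optimal
    (t : RTree) (V : Set (List ℕ)) (cost xi : List ℕ → ℝ)
    (hVnodes : ∀ p ∈ V, t.valid p)
    (hanc : ∀ (p : List ℕ) (i : ℕ), p ++ [i] ∈ V → p ∈ V)
    (hcost : ∀ p, 0 ≤ cost p) (hxi : ∀ p, xi p = 0) :
    ∀ a : List ℕ, t.valid a → a ∈ V →
      IsLeast {x : ℝ | ∃ S : Set (List ℕ), Feasible t V a S ∧
          x = ∑' b : (S : Set (List ℕ)), cost b.1}
        (sigmaAt t V cost xi a) ∧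
      Feasible t V a (VstarAt t V cost xi a) ∧
      sigmaAt t V cost xi a = ∑' b : (VstarAt t V cost xi a : Set (List ℕ)), cost b.1 := by
  intro a ha haV
  have h := isMinCostFeasible_VstarAt hVnodes hanc hcost hxi ha haV
  exact ⟨h.isLeast, h.1, h.2.1.symm⟩
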